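/- For any natural number a and any finite multiset M of natural numbers, the polynomial C̃_{a,M}(q,t) = Σ_{P ∈ L_{a,M}} q^{area(P)} t^{depth(P)} is symmetric in q and t, i.e., C̃_{a,M}(q,t) = C̃_{a,M}(t,q). -/

import Mathlib

/-! ## Plane trees -/

/-- A plane tree: a root together with an ordered (left-to-right) list of subtrees.
A node is a *leaf* if it has no children, and *internal* otherwise. -/
inductive PTree : Type where
  | node : List PTree → PTree


namespace Luka

/-! ## Łukasiewicz paths

A path is encoded by its list of step increments: the step `(1,k)` (an up-step `U_k` of
degree `k`) is encoded by `k : ℤ` with `k ≥ 0`, and the down step `D = (1,-1)` by `-1`. -/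

/-- `P` is a Łukasiewicz path: it is nonempty, uses steps `(1,k)` with `k ≥ -1`,
stays (weakly) above the `x`-axis before its last step, and ends at height `-1`
(so that it goes strictly below the axis only at the last step, which is forced
to be the down-step `D`). -/
def IsLukas (P : List ℤ) : Prop :=
  P ≠ [] ∧ (∀ s ∈ P, -1 ≤ s) ∧ (∀ n, n < P.length → 0 ≤ (P.take n).sum) ∧ P.sum = -1

/-- The degrees of the up-steps of `P`, from left to right (the *profile* of `P`). -/
def upDegs (P : List ℤ) : List ℕ := (P.filter (fun s => 0 ≤ s)).map Int.toNat

/-- The profile multiset `𝔐(P)`: the multiset of degrees of the up-steps of `P`. -/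
def profileM (P : List ℤ) : Multiset ℕ := (upDegs P : Multiset ℕ)

/-- The degree of the first up-step of `P`, if any. -/
def firstUp? (P : List ℤ) : Option ℕ := (upDegs P).head?

/-- The degree of the last up-step of `P`, if any. -/
def lastUp? (P : List ℤ) : Option ℕ := (upDegs P).getLast?

/-- Auxiliary: starting from height `h`, record the starting height of every up-step. -/
def areaVecAux : ℤ → List ℤ → List ℤ
  | _, [] => []
  | h, s :: rest => (if 0 ≤ s then [h] else []) ++ areaVecAux (h + s) rest

/-- The area vector `Area(P)`: the `i`-th entry is the `y`-coordinate of the starting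
point of the `i`-th up-step of `P`. -/
def areaVec (P : List ℤ) : List ℤ := areaVecAux 0 P

/-- `area(P)`: the sum of the entries of the area vector (entries of a Łukasiewicz
path are nonnegative, so taking `Int.toNat` entrywise is harmless). -/
def area (P : List ℤ) : ℕ := ((areaVec P).map Int.toNat).sum

/-- Auxiliary computation of the depth values: `cur` is the depth value of the previous
step (`0` initially), and `stack` holds the pending depth values of the future matching
down-steps (top of the stack = value for the next matching down-step to come).
Reading an up-step `U_k` whose value is `cur` (inherited from the previous step) pushes
the values `cur+1, …, cur+k` for its `k` matching down-steps (its first matching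
down-step, which crosses its topmost interior level, gets `cur+1`, etc.); reading a
down-step pops its value.  The list returned records the value `d_i` of each up-step,
from left to right. -/
def depthVecAux : ℕ → List ℕ → List ℤ → List ℕ
  | _, _, [] => []
  | cur, stack, s :: rest =>
    if 0 ≤ s then
      cur :: depthVecAux cur ((List.range s.toNat).map (fun i => cur + i + 1) ++ stack) rest
    else
      match stack with
      | [] => depthVecAux cur [] rest
      | v :: st => depthVecAux v st rest

/-- The depth vector `Depth(P)`: the values `d_i` at the up-steps of `P`, left to right. -/
def depthVec (P : List ℤ) : List ℕ := depthVecAux 0 [] P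

/-- `depth(P)`: the sum of the entries of the depth vector. -/
def depth (P : List ℤ) : ℕ := (depthVec P).sum

/-- `P ∈ 𝓛_M`. -/
def MemL (M : Multiset ℕ) (P : List ℤ) : Prop := IsLukas P ∧ profileM P = M

/-- `P ∈ 𝓛_{a,M}`: first up-step of degree `a`, profile multiset `M ⊎ {a}`. -/
def MemLa (a : ℕ) (M : Multiset ℕ) (P : List ℤ) : Prop :=
  IsLukas P ∧ firstUp? P = some a ∧ profileM P = a ::ₘ M

/-- `P ∈ 𝓛_{M,b}`: last up-step of degree `b`, profile multiset `M ⊎ {b}`. -/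
def MemLb (M : Multiset ℕ) (b : ℕ) (P : List ℤ) : Prop :=
  IsLukas P ∧ lastUp? P = some b ∧ profileM P = b ::ₘ M

/-- `P ∈ 𝓛_{a,M,b}`: first up-step of degree `a`, last up-step of degree `b`,
profile multiset `M ⊎ {a, b}`. -/
def MemLab (a : ℕ) (M : Multiset ℕ) (b : ℕ) (P : List ℤ) : Prop :=
  IsLukas P ∧ firstUp? P = some a ∧ lastUp? P = some b ∧ profileM P = a ::ₘ b ::ₘ M

/-! ## Plane-tree statistics -/

/-- The (ordered) children of the root of a plane tree. -/
def children : PTree → List PTree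
  | .node ts => ts

/-- The degree of (the root of) a plane tree: its number of children. -/
def numChildren (t : PTree) : ℕ := (children t).length

mutual
/-- Number of internal nodes of a plane tree. -/
def internCount : PTree → ℕ
  | .node [] => 0
  | .node (t :: ts) => 1 + internCountL (t :: ts)
def internCountL : List PTree → ℕ
  | [] => 0
  | t :: ts => internCount t + internCountL ts
end

mutual
/-- `lthornT T` = the sum of `lthorn(u)` over all internal nodes `u` of `T`, where
`lthorn(u)` is the number of descending edges of strict ancestors `v` of `u` lying to
the left of the path from `v` to `u`.  (Every internal node of the subtree rooted at
the `i`-th child (0-indexed) of a node gains `i` left thorns from that node.) -/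
def lthornT : PTree → ℕ
  | .node ts => lthornL 0 ts
def lthornL : ℕ → List PTree → ℕ
  | _, [] => 0
  | i, t :: ts => lthornT t + i * internCount t + lthornL (i + 1) ts
end

mutual
/-- `rthornT T` = the sum of `rthorn(u)` over all internal nodes `u` of `T`, where
`rthorn(u)` is the number of descending edges of strict ancestors `v` of `u` lying to
the right of the path from `v` to `u`. -/
def rthornT : PTree → ℕ
  | .node ts => rthornL ts
def rthornL : List PTree → ℕ
  | [] => 0
  | t :: ts => rthornT t + ts.length * internCount t + rthornL ts
end

mutual
/-- The list of the values `lthorn(u)` for the internal nodes `u` of `T`, in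
contour-walk (preorder) order. -/
def lthornList : PTree → List ℕ
  | .node [] => []
  | .node (t :: ts) => 0 :: lthornLL 0 (t :: ts)
def lthornLL : ℕ → List PTree → List ℕ
  | _, [] => []
  | i, t :: ts => (lthornList t).map (· + i) ++ lthornLL (i + 1) ts
end

mutual
/-- The list of the values `rthorn(u)` for the internal nodes `u` of `T`, in
contour-walk (preorder) order. -/
def rthornList : PTree → List ℕ
  | .node [] => []
  | .node (t :: ts) => 0 :: rthornLL (t :: ts)
def rthornLL : List PTree → List ℕ
  | [] => []
  | t :: ts => (rthornList t).map (· + ts.length) ++ rthornLL ts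
end

/-! ## The bijections `λ` and `τ` -/

mutual
/-- `λ`: record each node of the tree at its first visit in the left-to-right contour
walk: `U_k` (i.e. `k`) for an internal node with `k+1` children, `D` (i.e. `-1`)
for a leaf. -/
def lambdaT : PTree → List ℤ
  | .node ts => ((ts.length : ℤ) - 1) :: lambdaL ts
def lambdaL : List PTree → List ℤ
  | [] => []
  | t :: ts => lambdaT t ++ lambdaL ts
end

/-- Auxiliary for `τ`: reading the path from right to left, maintain the stack of the
already-built subtrees (in left-to-right order); a down-step `D` creates a leaf and an
up-step `U_k` grabs the `k+1` topmost subtrees as its children.  This builds the same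
tree as the left-to-right "leftmost bud" construction. -/
def tauStack (P : List ℤ) : List PTree :=
  P.foldr (fun s st =>
    if s < 0 then PTree.node [] :: st
    else PTree.node (st.take (s.toNat + 1)) :: st.drop (s.toNat + 1)) []

/-- `τ`: the plane tree associated with a Łukasiewicz path. -/
def tau (P : List ℤ) : PTree := (tauStack P).headD (.node [])

mutual
/-- The mirror of a plane tree: reverse the left-to-right order of the children of
every internal node. -/
def mir : PTree → PTree
  | .node ts => .node (mirL ts).reverse
def mirL : List PTree → List PTree
  | [] => []
  | t :: ts => mir t :: mirL ts
end

mutual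
/-- The subtrees rooted at the internal nodes of `T`, in contour-walk (preorder)
order. -/
def internalSubtrees : PTree → List PTree
  | .node [] => []
  | .node (t :: ts) => .node (t :: ts) :: internalSubtreesL (t :: ts)
def internalSubtreesL : List PTree → List PTree
  | [] => []
  | t :: ts => internalSubtrees t ++ internalSubtreesL ts
end

/-- The multiset of degrees of the non-root internal nodes of `T`. -/
def nonRootInternalDegs (T : PTree) : Multiset ℕ :=
  (((internalSubtreesL (children T)).map numChildren : List ℕ) : Multiset ℕ)

/-! ## Lodestars and the lodestar swap -/

/-- A node is a lodestar-type node if it is internal and all its children are leaves. -/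
def isLodestarNode (t : PTree) : Bool :=
  !(children t).isEmpty && (children t).all (fun c => (children c).isEmpty)

mutual
/-- The subtree rooted at the *left lodestar* of `T`: the first internal node, in
contour-walk (preorder) order, all of whose children are leaves (if it exists). -/
def leftLode? : PTree → Option PTree
  | .node ts =>
    if isLodestarNode (.node ts) then some (.node ts) else leftLodeL? ts
def leftLodeL? : List PTree → Option PTree
  | [] => none
  | t :: ts =>
    match leftLode? t with
    | some r => some r
    | none => leftLodeL? ts
end

mutual
/-- The subtree rooted at the *right lodestar* of `T`: the last internal node, in
contour-walk (preorder) order, all of whose children are leaves (if it exists). -/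
def rightLode? : PTree → Option PTree
  | .node ts =>
    match rightLodeL? ts with
    | some r => some r
    | none => if isLodestarNode (.node ts) then some (.node ts) else none
def rightLodeL? : List PTree → Option PTree
  | [] => none
  | t :: ts =>
    match rightLodeL? ts with
    | some r => some r
    | none => rightLode? t
end

mutual
/-- Replace the left lodestar of `T` (first preorder all-leaf-children internal node)
by the tree `r`; `none` if `T` has no internal node. -/
def replF : PTree → PTree → Option PTree
  | r, .node ts =>
    if isLodestarNode (.node ts) then some r
    else (replFL r ts).map PTree.node
def replFL : PTree → List PTree → Option (List PTree)
  | _, [] => none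
  | r, t :: ts =>
    match replF r t with
    | some t' => some (t' :: ts)
    | none => (replFL r ts).map (t :: ·)
end

mutual
/-- Replace the right lodestar of `T` (last preorder all-leaf-children internal node)
by the tree `r`; `none` if `T` has no internal node. -/
def replL : PTree → PTree → Option PTree
  | r, .node ts =>
    match replLL r ts with
    | some ts' => some (.node ts')
    | none => if isLodestarNode (.node ts) then some r else none
def replLL : PTree → List PTree → Option (List PTree)
  | _, [] => none
  | r, t :: ts =>
    match replLL r ts with
    | some ts' => some (t :: ts')
    | none => (replL r t).map (· :: ts)
end

/-- The lodestar swap: exchange the subtrees rooted at the left lodestar and the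
right lodestar of `T` (each a node together with its pendant leaves). -/
def lodeSwap (T : PTree) : PTree :=
  match leftLode? T, rightLode? T with
  | some L, some R => ((replF R T).bind (replL L)).getD T
  | _, _ => T

end Luka

/-!
Under the preorder bijection `λ` between plane trees and Łukasiewicz paths (an internal
node with `k + 1` children becomes `U_k`, a leaf becomes `D`), the area of `λ T` adds up, over
the internal nodes `u`, the edges leaving strict ancestors of `u` to the right of the path to
`u`, and the depth adds up those to the left. Mirroring the tree exchanges the two counts
while keeping the root degree and the multiset of node degrees, so `λ ∘ mir ∘ τ` is an
involution of `𝓛_{a,M}` exchanging area and depth.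
-/

namespace Luka

theorem mirL_eq_map : ∀ ts : List PTree, mirL ts = ts.map mir
  | [] => rfl
  | t :: ts => by rw [mirL, mirL_eq_map ts, List.map_cons]

theorem mir_node (ts : List PTree) : mir (.node ts) = .node (ts.map mir).reverse := by
  rw [mir, mirL_eq_map]

mutual
theorem mir_mir : ∀ T : PTree, mir (mir T) = T
  | .node ts => by
    rw [mir_node, mir_node, List.map_reverse, List.reverse_reverse, List.map_map,
      map_mir_comp_mir ts]
theorem map_mir_comp_mir : ∀ ts : List PTree, ts.map (mir ∘ mir) = ts
  | [] => rfl
  | t :: ts => by rw [List.map_cons, Function.comp_apply, mir_mir t, map_mir_comp_mir ts]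
end

theorem internCountL_eq_sum : ∀ ts : List PTree, internCountL ts = (ts.map internCount).sum
  | [] => rfl
  | t :: ts => by rw [internCountL, internCountL_eq_sum ts, List.map_cons, List.sum_cons]

theorem internCountL_reverse (ts : List PTree) : internCountL ts.reverse = internCountL ts := by
  rw [internCountL_eq_sum, internCountL_eq_sum, List.map_reverse, List.sum_reverse]

theorem internCount_node (ts : List PTree) :
    internCount (.node ts) = if ts = [] then 0 else 1 + internCountL ts := by
  cases ts <;> rfl

mutual
theorem internCount_mir : ∀ T : PTree, internCount (mir T) = internCount T
  | .node ts => by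
    rw [mir_node, internCount_node, internCount_node, internCountL_reverse,
      internCountL_map_mir ts]
    simp
theorem internCountL_map_mir : ∀ ts : List PTree, internCountL (ts.map mir) = internCountL ts
  | [] => rfl
  | t :: ts => by
    rw [List.map_cons, internCountL, internCountL, internCount_mir t, internCountL_map_mir ts]
end

theorem rthornL_append : ∀ A B : List PTree,
    rthornL (A ++ B) = rthornL A + B.length * internCountL A + rthornL B
  | [], B => by simp [rthornL, internCountL]
  | t :: ts, B => by
    simp only [List.cons_append, rthornL, rthornL_append ts B, internCountL, List.length_append]
    ring

mutual
theorem rthornT_mir : ∀ T : PTree, rthornT (mir T) = lthornT T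
  | .node ts => by
    rw [mir_node, rthornT, lthornT, lthornL_eq_rthornL_mir ts 0, zero_mul, add_zero]
theorem lthornL_eq_rthornL_mir : ∀ (ts : List PTree) (i : ℕ),
    lthornL i ts = rthornL (ts.map mir).reverse + i * internCountL ts
  | [], i => by simp [lthornL, rthornL, internCountL]
  | t :: ts, i => by
    rw [lthornL, lthornL_eq_rthornL_mir ts (i + 1), List.map_cons, List.reverse_cons,
      rthornL_append, internCountL_reverse, internCountL_map_mir]
    simp only [rthornL, internCountL, List.length_cons, List.length_nil, rthornT_mir t]
    ring
end

theorem lthornT_mir (T : PTree) : lthornT (mir T) = rthornT T := by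
  rw [← rthornT_mir (mir T), mir_mir]

/- `IsLukas` bounds prefix sums; its suffix-sum form below fits the recursion of `λ` and the
right-to-left construction of `τ`. -/
def NegSuffixSums (P : List ℤ) : Prop := ∀ n < P.length, (P.drop n).sum < 0

theorem negSuffixSums_cons {s : ℤ} {P : List ℤ} :
    NegSuffixSums (s :: P) ↔ (s :: P).sum < 0 ∧ NegSuffixSums P := by
  refine ⟨fun h => ⟨h 0 (by simp), fun n hn => h (n + 1) (by simpa using hn)⟩, ?_⟩
  rintro ⟨hs, hP⟩ (_ | n) hn
  · exact hs
  · exact hP n (by simpa using hn)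

theorem NegSuffixSums.append {A B : List ℤ} (hA : NegSuffixSums A) (hB : NegSuffixSums B)
    (hBsum : B.sum ≤ 0) : NegSuffixSums (A ++ B) := by
  intro n hn
  rw [List.drop_append, List.sum_append]
  rcases lt_or_ge n A.length with h | h
  · rw [Nat.sub_eq_zero_of_le h.le, List.drop_zero]
    linarith [hA n h]
  · rw [List.drop_eq_nil_of_le h, List.sum_nil, zero_add]
    exact hB _ (by rw [List.length_append] at hn; omega)

theorem isLukas_iff {P : List ℤ} :
    IsLukas P ↔ (∀ s ∈ P, -1 ≤ s) ∧ NegSuffixSums P ∧ P.sum = -1 := by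
  have split (n : ℕ) : (P.take n).sum + (P.drop n).sum = P.sum := by
    rw [← List.sum_append, List.take_append_drop]
  constructor
  · rintro ⟨-, hge, hpre, hsum⟩
    exact ⟨hge, fun n hn => by linarith [split n, hpre n hn], hsum⟩
  · rintro ⟨hge, hsuf, hsum⟩
    refine ⟨by rintro rfl; simp at hsum, hge, fun n hn => ?_, hsum⟩
    linarith [split n, hsuf n hn]

theorem lambdaL_append : ∀ A B : List PTree, lambdaL (A ++ B) = lambdaL A ++ lambdaL B
  | [], B => rfl
  | t :: ts, B => by rw [List.cons_append, lambdaL, lambdaL, lambdaL_append ts B, List.append_assoc]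

mutual
theorem sum_lambdaT : ∀ T : PTree, (lambdaT T).sum = -1
  | .node ts => by
    rw [lambdaT, List.sum_cons, sum_lambdaL ts]
    ring
theorem sum_lambdaL : ∀ ts : List PTree, (lambdaL ts).sum = -ts.length
  | [] => rfl
  | t :: ts => by
    rw [lambdaL, List.sum_append, sum_lambdaT t, sum_lambdaL ts, List.length_cons]
    push_cast
    ring
end

mutual
theorem neg_one_le_of_mem_lambdaT : ∀ T : PTree, ∀ s ∈ lambdaT T, -1 ≤ s
  | .node ts, s, hs => by
    rcases List.mem_cons.1 hs with rfl | hs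
    · omega
    · exact neg_one_le_of_mem_lambdaL ts s hs
theorem neg_one_le_of_mem_lambdaL : ∀ ts : List PTree, ∀ s ∈ lambdaL ts, -1 ≤ s
  | [], s, hs => by simp [lambdaL] at hs
  | t :: ts, s, hs => by
    rw [lambdaL, List.mem_append] at hs
    exact hs.elim (neg_one_le_of_mem_lambdaT t s) (neg_one_le_of_mem_lambdaL ts s)
end

mutual
theorem negSuffixSums_lambdaT : ∀ T : PTree, NegSuffixSums (lambdaT T)
  | .node ts => by
    rw [lambdaT, negSuffixSums_cons, ← lambdaT, sum_lambdaT]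
    exact ⟨by norm_num, negSuffixSums_lambdaL ts⟩
theorem negSuffixSums_lambdaL : ∀ ts : List PTree, NegSuffixSums (lambdaL ts)
  | [] => fun _ hn => absurd hn (Nat.not_lt_zero _)
  | t :: ts => by
    rw [lambdaL]
    refine (negSuffixSums_lambdaT t).append (negSuffixSums_lambdaL ts) ?_
    rw [sum_lambdaL]
    omega
end

theorem isLukas_lambdaT (T : PTree) : IsLukas (lambdaT T) :=
  isLukas_iff.2 ⟨neg_one_le_of_mem_lambdaT T, negSuffixSums_lambdaT T, sum_lambdaT T⟩

def tauStackFrom (P : List ℤ) (st : List PTree) : List PTree :=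
  P.foldr (fun s st =>
    if s < 0 then PTree.node [] :: st
    else PTree.node (st.take (s.toNat + 1)) :: st.drop (s.toNat + 1)) st

theorem tauStackFrom_append (A B : List ℤ) (st : List PTree) :
    tauStackFrom (A ++ B) st = tauStackFrom A (tauStackFrom B st) :=
  List.foldr_append ..

mutual
theorem tauStackFrom_lambdaT : ∀ (T : PTree) (st : List PTree),
    tauStackFrom (lambdaT T) st = T :: st
  | .node [], st => rfl
  | .node (t :: ts), st => by
    rw [lambdaT, ← List.singleton_append, tauStackFrom_append, tauStackFrom_lambdaL]
    have hk : (((t :: ts).length : ℤ) - 1).toNat + 1 = (t :: ts).length := by simp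
    simp only [tauStackFrom, List.foldr_cons, List.foldr_nil, hk, List.take_left, List.drop_left]
    rw [if_neg (by simp)]
theorem tauStackFrom_lambdaL : ∀ (ts : List PTree) (st : List PTree),
    tauStackFrom (lambdaL ts) st = ts ++ st
  | [], st => rfl
  | t :: ts, st => by
    rw [lambdaL, tauStackFrom_append, tauStackFrom_lambdaL ts, tauStackFrom_lambdaT,
      List.cons_append]
end

theorem tau_lambdaT (T : PTree) : tau (lambdaT T) = T := by
  rw [tau, tauStack, ← tauStackFrom, tauStackFrom_lambdaT]
  rfl

/-- Reading `P` from the right, `tauStack` holds one tree per pending down-step. -/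
theorem lambdaL_tauStack {P : List ℤ} (hge : ∀ s ∈ P, -1 ≤ s) (hneg : NegSuffixSums P) :
    lambdaL (tauStack P) = P ∧ ((tauStack P).length : ℤ) = -P.sum := by
  induction P with
  | nil => exact ⟨rfl, rfl⟩
  | cons s rest ih =>
    obtain ⟨hsum, hneg⟩ := negSuffixSums_cons.1 hneg
    obtain ⟨ih_lambda, ih_length⟩ := ih (fun x hx => hge x (List.mem_cons_of_mem _ hx)) hneg
    have hstep : tauStack (s :: rest) =
        if s < 0 then PTree.node [] :: tauStack rest
        else PTree.node ((tauStack rest).take (s.toNat + 1)) ::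
          (tauStack rest).drop (s.toNat + 1) := rfl
    rw [List.sum_cons] at hsum ⊢
    by_cases hs : s < 0
    · have hs1 : s = -1 := by linarith [hge s List.mem_cons_self]
      rw [hstep, if_pos hs, lambdaL, lambdaT, ih_lambda, hs1, List.length_cons]
      exact ⟨rfl, by push_cast; omega⟩
    · have hlen : s.toNat + 1 ≤ (tauStack rest).length := by omega
      rw [hstep, if_neg hs, lambdaL, lambdaT, List.cons_append, ← lambdaL_append,
        List.take_append_drop, ih_lambda, List.length_take, min_eq_left hlen,
        List.length_cons, List.length_drop]
      exact ⟨by congr 1; omega, by push_cast; omega⟩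

theorem lambdaT_tau {P : List ℤ} (hP : IsLukas P) : lambdaT (tau P) = P := by
  obtain ⟨hge, hneg, hsum⟩ := isLukas_iff.1 hP
  obtain ⟨hlambda, hlength⟩ := lambdaL_tauStack hge hneg
  rw [hsum, neg_neg] at hlength
  obtain ⟨T, hT⟩ := List.length_eq_one_iff.1 (by exact_mod_cast hlength)
  rw [hT, lambdaL, lambdaL, List.append_nil] at hlambda
  rw [tau, hT]
  exact hlambda

theorem upDegs_append (A B : List ℤ) : upDegs (A ++ B) = upDegs A ++ upDegs B := by
  simp [upDegs]

theorem profileM_append (A B : List ℤ) : profileM (A ++ B) = profileM A + profileM B := by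
  rw [profileM, profileM, profileM, upDegs_append, Multiset.coe_add]

theorem upDegs_lambdaT_node {ts : List PTree} (h : ts ≠ []) :
    upDegs (lambdaT (.node ts)) = (ts.length - 1) :: upDegs (lambdaL ts) := by
  have hl : 1 ≤ ts.length := List.length_pos_iff.2 h
  rw [lambdaT, upDegs, List.filter_cons, if_pos (by simp; omega), List.map_cons]
  congr 1
  omega

theorem firstUp?_lambdaT_mir (T : PTree) : firstUp? (lambdaT (mir T)) = firstUp? (lambdaT T) := by
  obtain ⟨_ | ⟨t, ts⟩⟩ := T
  · rfl
  · rw [mir_node, firstUp?, firstUp?, upDegs_lambdaT_node (by simp),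
      upDegs_lambdaT_node (by simp)]
    simp

theorem profileM_lambdaL_reverse : ∀ ts : List PTree,
    profileM (lambdaL ts.reverse) = profileM (lambdaL ts)
  | [] => rfl
  | t :: ts => by
    rw [List.reverse_cons, lambdaL_append, profileM_append, profileM_lambdaL_reverse ts, lambdaL,
      lambdaL, lambdaL, List.append_nil, profileM_append, add_comm]

mutual
theorem profileM_lambdaT_mir : ∀ T : PTree, profileM (lambdaT (mir T)) = profileM (lambdaT T)
  | .node [] => rfl
  | .node (t :: ts) => by
    have h := profileM_lambdaL_map_mir (t :: ts)
    rw [mir_node, profileM, profileM, upDegs_lambdaT_node (by simp),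
      upDegs_lambdaT_node (by simp), ← Multiset.cons_coe, ← Multiset.cons_coe]
    rw [← profileM_lambdaL_reverse, profileM, profileM] at h
    rw [h, List.length_reverse, List.length_map]
theorem profileM_lambdaL_map_mir : ∀ ts : List PTree,
    profileM (lambdaL (ts.map mir)) = profileM (lambdaL ts)
  | [] => rfl
  | t :: ts => by
    rw [List.map_cons, lambdaL, lambdaL, profileM_append, profileM_append,
      profileM_lambdaT_mir t, profileM_lambdaL_map_mir ts]
end

theorem areaVecAux_append : ∀ (A B : List ℤ) (h : ℤ),
    areaVecAux h (A ++ B) = areaVecAux h A ++ areaVecAux (h + A.sum) B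
  | [], B, h => by simp [areaVecAux]
  | s :: A, B, h => by
    simp only [List.cons_append, areaVecAux, areaVecAux_append A B (h + s), List.sum_cons,
      List.append_assoc, add_assoc]

theorem exists_eq_of_mem_areaVecAux : ∀ {P : List ℤ} {h x : ℤ}, x ∈ areaVecAux h P →
    ∃ n < P.length, x = h + (P.take n).sum
  | [], _, _, hx => by simp [areaVecAux] at hx
  | s :: P, h, x, hx => by
    rw [areaVecAux, List.mem_append] at hx
    rcases hx with hx | hx
    · exact ⟨0, by simp, by simp_all⟩
    · obtain ⟨n, hn, rfl⟩ := exists_eq_of_mem_areaVecAux hx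
      exact ⟨n + 1, by simpa using hn, by simp [add_assoc]⟩

theorem area_eq_sum_areaVec {P : List ℤ} (hP : IsLukas P) : (area P : ℤ) = (areaVec P).sum := by
  have hnonneg : ∀ x ∈ areaVec P, 0 ≤ x := fun x hx => by
    obtain ⟨n, hn, rfl⟩ := exists_eq_of_mem_areaVecAux hx
    simpa using hP.2.2.1 n hn
  rw [area, Nat.cast_list_sum, List.map_map]
  congr 1
  exact (List.map_congr_left fun x hx => Int.toNat_of_nonneg (hnonneg x hx)).trans (List.map_id _)

mutual
theorem sum_areaVecAux_lambdaT : ∀ (T : PTree) (h : ℤ),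
    (areaVecAux h (lambdaT T)).sum = h * internCount T + rthornT T
  | .node [], h => by simp [lambdaT, lambdaL, areaVecAux, internCount, rthornT, rthornL]
  | .node (t :: ts), h => by
    rw [lambdaT, areaVecAux, if_pos (by simp), List.singleton_append, List.sum_cons,
      show h + (((t :: ts).length : ℤ) - 1) = (h - 1) + (t :: ts).length by ring,
      sum_areaVecAux_lambdaL (t :: ts) (h - 1), internCount, rthornT]
    push_cast
    ring
theorem sum_areaVecAux_lambdaL : ∀ (ts : List PTree) (h : ℤ),
    (areaVecAux (h + ts.length) (lambdaL ts)).sum = (h + 1) * internCountL ts + rthornL ts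
  | [], h => by simp [lambdaL, areaVecAux, internCountL, rthornL]
  | t :: ts, h => by
    rw [lambdaL, areaVecAux_append, List.sum_append, sum_lambdaT t, sum_areaVecAux_lambdaT t,
      show h + ((t :: ts).length : ℤ) + -1 = h + ts.length by simp; ring,
      sum_areaVecAux_lambdaL ts h, internCountL, rthornL]
    push_cast [List.length_cons]
    ring
end

theorem area_lambdaT (T : PTree) : area (lambdaT T) = rthornT T := by
  have h := sum_areaVecAux_lambdaT T 0
  rw [zero_mul, zero_add, ← areaVec, ← area_eq_sum_areaVec (isLukas_lambdaT T)] at h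
  exact_mod_cast h

theorem depthVecAux_cons_of_nonneg {s : ℤ} (hs : 0 ≤ s) (c : ℕ) (st : List ℕ)
    (rest : List ℤ) :
    depthVecAux c st (s :: rest) =
      c :: depthVecAux c ((List.range s.toNat).map (fun i => c + i + 1) ++ st) rest := by
  simp [depthVecAux, hs]

theorem depthVecAux_neg_one_cons (c v : ℕ) (st : List ℕ) (rest : List ℤ) :
    depthVecAux c (v :: st) (-1 :: rest) = depthVecAux v st rest := by
  simp [depthVecAux]

theorem map_range_succ (n c : ℕ) :
    (List.range (n + 1)).map (fun j => c + j + 1) =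
      (c + 1) :: (List.range n).map (fun j => c + 1 + j + 1) := by
  rw [List.range_succ_eq_map, List.map_cons, List.map_map]
  congr 1
  exact List.map_congr_left fun j _ => by simp only [Function.comp_apply]; omega

/- Reading `λ T` from depth value `c` and stack `st` contributes `c` per internal node plus the
left thorns, and ends with the pop of the final leaf of `T`. The depth value `e` this pop starts
from only matters when `st` is empty. -/
mutual
theorem sum_depthVecAux_lambdaT : ∀ (T : PTree) (c : ℕ) (st : List ℕ) (rest : List ℤ),
    ∃ e, (depthVecAux c st (lambdaT T ++ rest)).sum =
      c * internCount T + lthornT T + (depthVecAux e st (-1 :: rest)).sum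
  | .node [], c, _, _ => ⟨c, by simp [lambdaT, lambdaL, internCount, lthornT, lthornL]⟩
  | .node (t :: ts), c, st, rest => by
    obtain ⟨e, he⟩ := sum_depthVecAux_lambdaL t ts c 0 st rest
    simp only [add_zero] at he
    refine ⟨e, ?_⟩
    rw [lambdaT, List.cons_append, depthVecAux_cons_of_nonneg (by simp), List.sum_cons,
      show (((t :: ts).length : ℤ) - 1).toNat = ts.length by simp, he, internCount, lthornT]
    ring
termination_by T => sizeOf T
theorem sum_depthVecAux_lambdaL : ∀ (t : PTree) (ts : List PTree) (b i : ℕ) (st : List ℕ)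
    (rest : List ℤ), ∃ e,
    (depthVecAux (b + i) ((List.range ts.length).map (fun j => b + i + j + 1) ++ st)
        (lambdaL (t :: ts) ++ rest)).sum =
      b * internCountL (t :: ts) + lthornL i (t :: ts) + (depthVecAux e st (-1 :: rest)).sum
  | t, [], b, i, st, rest => by
    obtain ⟨e, he⟩ := sum_depthVecAux_lambdaT t (b + i) st rest
    refine ⟨e, ?_⟩
    simp only [lambdaL, List.append_nil, List.length_nil, List.range_zero, List.map_nil,
      List.nil_append, he, internCountL, lthornL]
    ring
  | t, t' :: ts, b, i, st, rest => by
    obtain ⟨_, he₁⟩ := sum_depthVecAux_lambdaT t (b + i)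
      ((b + i + 1) :: ((List.range ts.length).map (fun j => b + i + 1 + j + 1) ++ st))
      (lambdaL (t' :: ts) ++ rest)
    obtain ⟨e, he₂⟩ := sum_depthVecAux_lambdaL t' ts b (i + 1) st rest
    refine ⟨e, ?_⟩
    rw [lambdaL, List.append_assoc, List.length_cons, map_range_succ, List.cons_append, he₁,
      depthVecAux_neg_one_cons, show b + i + 1 = b + (i + 1) by ring, he₂]
    simp only [internCountL, lthornL]
    ring
termination_by t ts => sizeOf t + sizeOf ts
end

theorem depth_lambdaT (T : PTree) : depth (lambdaT T) = lthornT T := by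
  obtain ⟨e, he⟩ := sum_depthVecAux_lambdaT T 0 [] []
  simpa [depth, depthVec, depthVecAux] using he

def sigma (P : List ℤ) : List ℤ := lambdaT (mir (tau P))

theorem memLa_sigma {a : ℕ} {M : Multiset ℕ} {P : List ℤ} (hP : MemLa a M P) :
    MemLa a M (sigma P) := by
  obtain ⟨hLukas, hfirst, hprofile⟩ := hP
  refine ⟨isLukas_lambdaT _, ?_, ?_⟩
  · rw [sigma, firstUp?_lambdaT_mir, lambdaT_tau hLukas, hfirst]
  · rw [sigma, profileM_lambdaT_mir, lambdaT_tau hLukas, hprofile]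

theorem sigma_sigma {P : List ℤ} (hP : IsLukas P) : sigma (sigma P) = P := by
  rw [sigma, sigma, tau_lambdaT, mir_mir, lambdaT_tau hP]

theorem area_sigma {P : List ℤ} (hP : IsLukas P) : area (sigma P) = depth P := by
  rw [sigma, area_lambdaT, rthornT_mir, ← depth_lambdaT, lambdaT_tau hP]

theorem depth_sigma {P : List ℤ} (hP : IsLukas P) : depth (sigma P) = area P := by
  rw [sigma, depth_lambdaT, lthornT_mir, ← area_lambdaT, lambdaT_tau hP]

end Luka

open Luka in
/-- **[QZ25, Theorem 1.1].**  For any natural `a` and any finite multiset `M` of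
naturals, the polynomial `C̃_{a,M}(q,t) = Σ_{P ∈ 𝓛_{a,M}} q^{area(P)} t^{depth(P)}`
is symmetric in `q, t`.  The finite set `𝓛_{a,M}` is presented as an arbitrary
`Finset S` whose members are exactly the Łukasiewicz paths with first up-step of
degree `a` and profile multiset `M ⊎ {a}`. -/
theorem tildeC_aM_qt_symm (a : ℕ) (M : Multiset ℕ) {R : Type*} [CommSemiring R]
    (q t : R) (S : Finset (List ℤ)) (hS : ∀ P, P ∈ S ↔ MemLa a M P) :
    ∑ P ∈ S, q ^ area P * t ^ depth P = ∑ P ∈ S, t ^ area P * q ^ depth P := by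
  have hsigma_mem (P : List ℤ) (hP : P ∈ S) : sigma P ∈ S :=
    (hS _).2 (memLa_sigma ((hS P).1 hP))
  have hLukas (P : List ℤ) (hP : P ∈ S) : IsLukas P := ((hS P).1 hP).1
  refine Finset.sum_nbij' sigma sigma hsigma_mem hsigma_mem
    (fun P hP => sigma_sigma (hLukas P hP)) (fun P hP => sigma_sigma (hLukas P hP)) ?_
  intro P hP
  rw [area_sigma (hLukas P hP), depth_sigma (hLukas P hP), mul_comm]
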